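/- Let X be a compact metric space and f : X → X a homeomorphism such that the set X \ Ω(f) of wandering points is uncountable. Then the topological entropy of the induced map 2^f on the hyperspace of nonempty compact subsets is infinite. -/
import Mathlib


open TopologicalSpace

/-- The induced map on the hyperspace of nonempty compact subsets, `A ↦ f(A)`. -/
noncomputable def inducedHyper {X : Type*} [MetricSpace X] (f : X → X) (hf : Continuous f) :
    NonemptyCompacts X → NonemptyCompacts X :=
  fun A => ⟨⟨f '' (A : Set X), A.isCompact.image hf⟩, A.nonempty.image f⟩

/-- The set of nonwandering points of `f`: points `x` such that every neighborhood `U`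
of `x` satisfies `f⁻ⁿ(U) ∩ U ≠ ∅` for some `n ≥ 1`. -/
def nonwandering {X : Type*} [TopologicalSpace X] (f : X → X) : Set X :=
  {x : X | ∀ U ∈ nhds x, ∃ n : ℕ, 0 < n ∧ ((f^[n] ⁻¹' U) ∩ U).Nonempty}

open Set Metric Dynamics Filter ENNReal

section Aux

variable {X : Type*} [MetricSpace X]

lemma inducedHyper_iterate_coe (f : X → X) (hf : Continuous f) (j : ℕ) (A : NonemptyCompacts X) :
    (((inducedHyper f hf)^[j] A : NonemptyCompacts X) : Set X) = f^[j] '' (A : Set X) := by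
  induction j with
  | zero => simp
  | succ j ih =>
    rw [Function.iterate_succ_apply']
    show f '' (((inducedHyper f hf)^[j] A : NonemptyCompacts X) : Set X) = _
    rw [ih, ← Set.image_comp, ← Function.iterate_succ']

lemma iter_apply_symm_iter (f : X ≃ₜ X) (m : ℕ) (x : X) :
    (⇑f)^[m] ((⇑f.symm)^[m] x) = x :=
  (Function.LeftInverse.iterate f.apply_symm_apply m) x

/-- Existence of an infinite open set with no return. -/
lemma exists_wandering_open [CompactSpace X] (f : X ≃ₜ X)
    (h : ¬ ((nonwandering (⇑f))ᶜ).Countable) :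
    ∃ V : Set X, IsOpen V ∧ V.Infinite ∧ ∀ m : ℕ, 0 < m → (⇑f)^[m] ⁻¹' V ∩ V = ∅ := by
  set W := (nonwandering (⇑f))ᶜ with hWdef
  have hW : ∀ x ∈ W, ∃ V : Set X, IsOpen V ∧ x ∈ V ∧
      ∀ m : ℕ, 0 < m → (⇑f)^[m] ⁻¹' V ∩ V = ∅ := by
    intro x hx
    simp only [hWdef, Set.mem_compl_iff, nonwandering, Set.mem_setOf_eq] at hx
    push_neg at hx
    obtain ⟨U, hU, hno⟩ := hx
    refine ⟨interior U, isOpen_interior, mem_interior_iff_mem_nhds.2 hU, fun m hm => ?_⟩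
    rw [Set.eq_empty_iff_forall_notMem]
    rintro z ⟨hz1, hz2⟩
    exact Set.eq_empty_iff_forall_notMem.1 (hno m hm) z
      ⟨Set.mem_preimage.2 (interior_subset (Set.mem_preimage.1 hz1)), interior_subset hz2⟩
  choose! V hVopen hVmem hVnr using hW
  have hWsub : W ⊆ ⋃ x ∈ W, V x := fun x hx => Set.mem_biUnion hx (hVmem x hx)
  have hL : IsLindelof W := HereditarilyLindelof_LindelofSets W
  obtain ⟨b', hb'sub, hb'c, hcover⟩ :=
    hL.elim_countable_subcover_image (fun x hx => hVopen x hx) hWsub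
  obtain ⟨x, hxb, hxunc⟩ : ∃ x ∈ b', ¬(V x).Countable := by
    by_contra hall
    push_neg at hall
    exact h (Set.Countable.mono hcover (Set.Countable.biUnion hb'c hall))
  exact ⟨V x, hVopen x (hb'sub hxb), fun hf => hxunc hf.countable,
    hVnr x (hb'sub hxb)⟩

open EReal in
/-- The quantitative lower bound. -/
lemma log_le_coverEntropy_inducedHyper [CompactSpace X] (f : X ≃ₜ X) {V : Set X}
    (hV : IsOpen V) (hVinf : V.Infinite)
    (hnr : ∀ m : ℕ, 0 < m → (⇑f)^[m] ⁻¹' V ∩ V = ∅) (k : ℕ) :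
    ENNReal.log k ≤ Dynamics.coverEntropy (inducedHyper (⇑f) f.continuous) Set.univ := by
  classical
  set T := inducedHyper (⇑f) f.continuous with hT
  obtain ⟨t, htV, htk⟩ := hVinf.exists_subset_card_eq k
  -- a positive lower bound on distances between distinct points of t
  obtain ⟨δ, δpos, hδ⟩ : ∃ δ > 0, ∀ a ∈ t, ∀ b ∈ t, a ≠ b → δ ≤ dist a b := by
    set P := (t ×ˢ t).filter (fun p : X × X => p.1 ≠ p.2) with hP
    rcases P.eq_empty_or_nonempty with hPe | hPn
    · refine ⟨1, one_pos, fun a ha b hb hab => absurd ?_ (hPe ▸ Finset.notMem_empty (a, b))⟩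
      exact Finset.mem_filter.2 ⟨Finset.mem_product.2 ⟨ha, hb⟩, hab⟩
    · obtain ⟨p, hp, hmin⟩ := P.exists_min_image (fun p => dist p.1 p.2) hPn
      refine ⟨dist p.1 p.2, dist_pos.2 (Finset.mem_filter.1 hp).2, fun a ha b hb hab => ?_⟩
      exact hmin (a, b) (Finset.mem_filter.2 ⟨Finset.mem_product.2 ⟨ha, hb⟩, hab⟩)
  -- a uniform radius around points of t staying in V
  obtain ⟨r, rpos, hr⟩ := t.finite_toSet.isCompact.exists_thickening_subset_open hV htV
  have hball : ∀ a ∈ t, Metric.ball a r ⊆ V := fun a ha =>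
    (Metric.ball_subset_thickening ha r).trans hr
  set ε : ℝ := min δ r / 3 with hε
  have εpos : 0 < ε := by positivity
  set U : Set (NonemptyCompacts X × NonemptyCompacts X) :=
    {p : NonemptyCompacts X × NonemptyCompacts X | dist p.1 p.2 < ε} with hU
  have hUuni : U ∈ uniformity (NonemptyCompacts X) := dist_mem_uniformity εpos
  rw [Dynamics.coverEntropy_eq_iSup_netEntropyEntourage]
  refine le_trans ?_ (le_iSup₂ U hUuni)
  -- it suffices to bound netMaxcard from below for each n ≥ 1
  have key : ∀ n : ℕ, 0 < n → (↑(k ^ n) : ℕ∞) ≤ netMaxcard T Set.univ U n := by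
    intro n hn
    haveI : Nonempty (Fin n) := ⟨⟨0, hn⟩⟩
    -- the k marked points
    have hct : Fintype.card ↥t = k := by rw [Fintype.card_coe, htk]
    set e : ↥t ≃ Fin k := Fintype.equivFinOfCardEq hct with he
    set y : Fin k → X := fun i => ((e.symm i : ↥t) : X) with hy
    have yinj : Function.Injective y := fun a b hab =>
      e.symm.injective (Subtype.ext hab)
    have ymem : ∀ i, y i ∈ t := fun i => (e.symm i).2
    have ymemV : ∀ i, y i ∈ V := fun i => htV (ymem i)
    -- the compact sets
    set Cset : (Fin n → Fin k) → Set X :=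
      fun σ => Set.range (fun j : Fin n => (⇑f.symm)^[(j : ℕ)] (y (σ j))) with hCset
    have hCfin : ∀ σ, (Cset σ).Finite := fun σ => Set.finite_range _
    have hCne : ∀ σ, (Cset σ).Nonempty := fun σ => Set.range_nonempty _
    set C : (Fin n → Fin k) → NonemptyCompacts X :=
      fun σ => ⟨⟨Cset σ, (hCfin σ).isCompact⟩, hCne σ⟩ with hC
    have himg : ∀ σ (j : ℕ), ((T^[j] (C σ) : NonemptyCompacts X) : Set X)
        = (⇑f)^[j] '' Cset σ := by
      intro σ j
      rw [hT]
      exact inducedHyper_iterate_coe (⇑f) f.continuous j (C σ)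
    -- claim 1 : the marked point at time j
    have claim1 : ∀ σ (j : Fin n), y (σ j) ∈ (⇑f)^[(j : ℕ)] '' Cset σ := by
      intro σ j
      exact ⟨(⇑f.symm)^[(j : ℕ)] (y (σ j)), ⟨j, rfl⟩, iter_apply_symm_iter f _ _⟩
    -- claim 2 : points of the iterated image inside V
    have claim2 : ∀ σ (j : Fin n) q, q ∈ (⇑f)^[(j : ℕ)] '' Cset σ → q ∈ V → q = y (σ j) := by
      rintro σ j q ⟨-, ⟨i, rfl⟩, rfl⟩ hqV
      rcases lt_trichotomy (i : ℕ) (j : ℕ) with hij | hij | hij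
      · exfalso
        obtain ⟨m, hm⟩ : ∃ m : ℕ, (j : ℕ) = m + (i : ℕ) := ⟨(j : ℕ) - i, by omega⟩
        have hmpos : 0 < m := by omega
        have hq : (⇑f)^[(j : ℕ)] ((⇑f.symm)^[(i : ℕ)] (y (σ i)))
            = (⇑f)^[m] (y (σ i)) := by
          rw [hm, Function.iterate_add_apply, iter_apply_symm_iter]
        have hmem : y (σ i) ∈ (⇑f)^[m] ⁻¹' V ∩ V :=
          ⟨by rw [Set.mem_preimage, ← hq]; exact hqV, ymemV _⟩
        rw [hnr m hmpos] at hmem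
        exact hmem
      · have hji : i = j := Fin.ext hij
        subst hji
        rw [iter_apply_symm_iter]
      · exfalso
        obtain ⟨m, hm⟩ : ∃ m : ℕ, (i : ℕ) = (j : ℕ) + m := ⟨(i : ℕ) - j, by omega⟩
        have hmpos : 0 < m := by omega
        have hq : (⇑f)^[(j : ℕ)] ((⇑f.symm)^[(i : ℕ)] (y (σ i)))
            = (⇑f.symm)^[m] (y (σ i)) := by
          rw [hm, Function.iterate_add_apply, iter_apply_symm_iter]
        have hmem : (⇑f)^[(j : ℕ)] ((⇑f.symm)^[(i : ℕ)] (y (σ i)))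
            ∈ (⇑f)^[m] ⁻¹' V ∩ V := by
          refine ⟨?_, hqV⟩
          rw [Set.mem_preimage, hq, iter_apply_symm_iter]
          exact ymemV _
        rw [hnr m hmpos] at hmem
        exact hmem
    -- claim 3 : separation
    have claim3 : ∀ σ σ', σ ≠ σ' →
        ∃ j : Fin n, min δ r ≤ dist (T^[(j : ℕ)] (C σ)) (T^[(j : ℕ)] (C σ')) := by
      intro σ σ' hne
      obtain ⟨j, hj⟩ := Function.ne_iff.1 hne
      refine ⟨j, ?_⟩
      rw [NonemptyCompacts.dist_eq]
      have hmem : y (σ j) ∈ ((T^[(j : ℕ)] (C σ) : NonemptyCompacts X) : Set X) := by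
        rw [himg]; exact claim1 σ j
      have hA'ne : ((T^[(j : ℕ)] (C σ') : NonemptyCompacts X) : Set X).Nonempty :=
        (T^[(j : ℕ)] (C σ')).nonempty
      have hedist : EMetric.hausdorffEdist
          ((T^[(j : ℕ)] (C σ) : NonemptyCompacts X) : Set X)
          ((T^[(j : ℕ)] (C σ') : NonemptyCompacts X) : Set X) ≠ ⊤ :=
        Metric.hausdorffEdist_ne_top_of_nonempty_of_bounded
          (T^[(j : ℕ)] (C σ)).nonempty hA'ne
          (T^[(j : ℕ)] (C σ)).isCompact.isBounded
          (T^[(j : ℕ)] (C σ')).isCompact.isBounded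
      refine le_trans ?_ (Metric.infDist_le_hausdorffDist_of_mem hmem hedist)
      by_contra hcon
      push_neg at hcon
      obtain ⟨q, hqA', hq⟩ := (Metric.infDist_lt_iff hA'ne).1 hcon
      by_cases hqV : q ∈ V
      · have hq' : q = y (σ' j) := by
          apply claim2 σ' j q _ hqV
          rw [← himg]; exact hqA'
        have hne' : y (σ j) ≠ y (σ' j) := fun hc => hj (yinj hc)
        have hd := hδ _ (ymem (σ j)) _ (ymem (σ' j)) hne'
        rw [← hq'] at hd
        have hd' : min δ r ≤ dist (y (σ j)) q := le_trans (min_le_left _ _) hd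
        linarith
      · have hqb : q ∈ Metric.ball (y (σ j)) r := by
          rw [Metric.mem_ball, dist_comm]
          exact lt_of_lt_of_le hq (min_le_right _ _)
        exact absurd (hball _ (ymem (σ j)) hqb) hqV
    -- injectivity
    have Cinj : Function.Injective C := by
      intro σ σ' hCe
      by_contra hne
      obtain ⟨j, hj⟩ := claim3 σ σ' hne
      rw [hCe] at hj
      simp only [dist_self] at hj
      have hpos : (0:ℝ) < min δ r := lt_min δpos rpos
      linarith
    -- the net
    set s : Finset (NonemptyCompacts X) := Finset.image C Finset.univ with hs
    have hcard : s.card = k ^ n := by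
      rw [hs, Finset.card_image_of_injective _ Cinj, Finset.card_univ]
      simp [Fintype.card_fun]
    have hnet : IsDynNetIn T Set.univ U n (s : Set (NonemptyCompacts X)) := by
      constructor
      · exact Set.subset_univ _
      · intro A hA B hB hAB
        simp only [hs, Finset.coe_image, Set.mem_image, Finset.mem_coe] at hA hB
        obtain ⟨σ, -, rfl⟩ := hA
        obtain ⟨σ', -, rfl⟩ := hB
        have hσne : σ ≠ σ' := fun hc => hAB (by rw [hc])
        rw [Function.onFun]
        apply Set.disjoint_left.2
        intro z hz1 hz2
        have hz1' : (C σ, z) ∈ dynEntourage T U n := hz1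
        have hz2' : (C σ', z) ∈ dynEntourage T U n := hz2
        obtain ⟨j, hj⟩ := claim3 σ σ' hσne
        have d1 := mem_dynEntourage.1 hz1' (j : ℕ) j.isLt
        have d2 := mem_dynEntourage.1 hz2' (j : ℕ) j.isLt
        rw [hU, Set.mem_setOf_eq] at d1 d2
        have htri : dist (T^[(j : ℕ)] (C σ)) (T^[(j : ℕ)] (C σ'))
            ≤ dist (T^[(j : ℕ)] (C σ)) (T^[(j : ℕ)] z)
              + dist (T^[(j : ℕ)] z) (T^[(j : ℕ)] (C σ')) := dist_triangle _ _ _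
        rw [dist_comm (T^[(j : ℕ)] z)] at htri
        have hmin3 : min δ r = 3 * ε := by rw [hε]; ring
        rw [hmin3] at hj
        linarith
    calc (↑(k ^ n) : ℕ∞) = (s.card : ℕ∞) := by rw [hcard]
      _ ≤ netMaxcard T Set.univ U n := hnet.card_le_netMaxcard
  -- conclude: netEntropyEntourage ≥ log k
  unfold Dynamics.netEntropyEntourage
  refine Filter.le_limsup_of_frequently_le ?_
  apply Filter.Eventually.frequently
  rw [eventually_atTop]
  refine ⟨1, fun n hn => ?_⟩
  have hn' : 0 < n := hn
  rw [EReal.le_div_iff_mul_le (by exact_mod_cast hn') (EReal.natCast_ne_top n)]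
  rw [mul_comm, ← ENNReal.log_pow]
  apply ENNReal.log_monotone
  have hle := ENat.toENNReal_le.2 (key n hn')
  have hcast : ((↑(k ^ n) : ℕ∞) : ℝ≥0∞) = (k : ℝ≥0∞) ^ n := by
    push_cast
    ring
  rw [← hcast]
  exact hle

end Aux

/-- If the set of wandering points of a homeomorphism `f` of a compact metric space is
uncountable, then the topological entropy of the induced map `2^f` is infinite. -/
theorem entropy_inducedHyper_top_of_uncountable {X : Type*} [MetricSpace X] [CompactSpace X]
    (f : X ≃ₜ X) (h : ¬ ((nonwandering (⇑f))ᶜ).Countable) :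
    Dynamics.coverEntropy (inducedHyper (⇑f) f.continuous) Set.univ = ⊤ := by
  obtain ⟨V, hVopen, hVinf, hVnr⟩ := exists_wandering_open f h
  refine le_antisymm le_top ?_
  have H : ∀ k : ℕ, ENNReal.log k ≤
      Dynamics.coverEntropy (inducedHyper (⇑f) f.continuous) Set.univ :=
    fun k => log_le_coverEntropy_inducedHyper f hVopen hVinf hVnr k
  have htop : (⊤ : EReal) = ⨆ k : ℕ, ENNReal.log k := by
    have h1 : (⨆ k : ℕ, (k : ℝ≥0∞)) = ⊤ := by
      rw [iSup_eq_top]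
      intro b hb
      exact ENNReal.exists_nat_gt hb.ne
    calc (⊤ : EReal) = ENNReal.log ⊤ := ENNReal.log_top.symm
      _ = ENNReal.log (⨆ k : ℕ, (k : ℝ≥0∞)) := by rw [h1]
      _ = ⨆ k : ℕ, ENNReal.log (k : ℝ≥0∞) := by
          exact ENNReal.logOrderIso.map_iSup (fun k : ℕ => (k : ℝ≥0∞))
  rw [htop]
  exact iSup_le H
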